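/- Let q be a prime power and let l be an odd prime coprime to q. Then either every monic irreducible factor of x^l − 1 over F_{q^2} is SCRIM, or x − 1 is the only SCRIM factor of x^l − 1 over F_{q^2}. -/
import Mathlib


open Polynomial

/-- The reciprocal polynomial `f*(x) = x^(deg f) * f(0)⁻¹ * f(1/x)`. -/
noncomputable def crecip {F : Type*} [Field F] (f : F[X]) : F[X] :=
  C (f.coeff 0)⁻¹ * f.reverse

/-- The conjugate-reciprocal polynomial `f†`, obtained by applying the
conjugation `a ↦ a ^ q` to each coefficient of `f*`. -/
noncomputable def cdagger {F : Type*} [Field F] (q : ℕ) (f : F[X]) : F[X] :=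
  (crecip f).sum fun i a => C (a ^ q) * X ^ i

/-- A polynomial is SCRIM if it is monic, irreducible, and self-conjugate-reciprocal. -/
def IsSCRIM {F : Type*} [Field F] (q : ℕ) (f : F[X]) : Prop :=
  f.Monic ∧ Irreducible f ∧ f = cdagger q f

/-- The set `Ω_{q²,n}` of SCRIM factors of `x^n - 1` over `F = F_{q²}`. -/
def scrimFactors (F : Type*) [Field F] (q n : ℕ) : Set F[X] :=
  {f | IsSCRIM q f ∧ f ∣ X ^ n - 1}

section Aux
variable {F : Type*} [Field F]

lemma cdagger_eq_map {p k q : ℕ} [ExpChar F p] (hq : q = p ^ k) (f : F[X]) :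
    cdagger q f = (crecip f).map (iterateFrobenius F p k) := by
  unfold cdagger
  rw [Polynomial.map, eval₂_eq_sum]
  congr 1
  funext i a
  rw [RingHom.comp_apply, iterateFrobenius_def, hq]

lemma crecip_monic {f : F[X]} (h0 : f.coeff 0 ≠ 0) : (crecip f).Monic := by
  have htc : f.trailingCoeff = f.coeff 0 := by
    rw [trailingCoeff, natTrailingDegree_eq_zero.mpr (Or.inr h0)]
  unfold crecip Monic
  rw [leadingCoeff_mul, leadingCoeff_C, reverse_leadingCoeff, htc,
    inv_mul_cancel₀ h0]

lemma crecip_natDegree {f : F[X]} (h0 : f.coeff 0 ≠ 0) :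
    (crecip f).natDegree = f.natDegree := by
  unfold crecip
  rw [natDegree_C_mul (inv_ne_zero h0), reverse_natDegree,
    natTrailingDegree_eq_zero.mpr (Or.inr h0), tsub_zero]

variable {E : Type*} [Field E] [Algebra F E]

lemma aeval_cdagger {p k q : ℕ} [ExpChar F p] [ExpChar E p] (hq : q = p ^ k)
    {f : F[X]} {α : E} (hα : α ≠ 0) (hroot : aeval α f = 0) :
    aeval (α⁻¹ ^ q) (cdagger q f) = 0 := by
  have hrev : eval₂ (algebraMap F E) α⁻¹ f.reverse = 0 := by
    letI := invertibleOfNonzero hα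
    have := (eval₂_reverse_eq_zero_iff (algebraMap F E) α f).mpr
      (by rwa [aeval_def] at hroot)
    rwa [invOf_eq_inv] at this
  have hcre : aeval α⁻¹ (crecip f) = 0 := by
    unfold crecip
    rw [map_mul]
    have h2 : aeval α⁻¹ f.reverse = 0 := by rwa [aeval_def]
    rw [h2, mul_zero]
  rw [cdagger_eq_map hq]
  have hτ : α⁻¹ ^ q = iterateFrobenius E p k α⁻¹ := by
    rw [iterateFrobenius_def, hq]
  have hcomm : (iterateFrobenius E p k).comp (algebraMap F E) =
      (algebraMap F E).comp (iterateFrobenius F p k) := by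
    ext a
    simp [iterateFrobenius_def, map_pow]
  rw [hτ, aeval_def, eval₂_map, ← hcomm, ← hom_eval₂, ← aeval_def, hcre, map_zero]

lemma monic_dvd_eq {f g : F[X]} (hf : f.Monic) (hg : g.Monic) (h : f ∣ g)
    (hd : g.natDegree ≤ f.natDegree) : f = g := by
  obtain ⟨u, rfl⟩ := h
  have hu : u.Monic := hf.of_mul_monic_left hg
  have hdeg : (f * u).natDegree = f.natDegree + u.natDegree :=
    natDegree_mul hf.ne_zero hu.ne_zero
  have h0 : u.natDegree = 0 := by omega
  rw [hu.natDegree_eq_zero.mp h0, mul_one]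

lemma crecip_X_sub_one : crecip (X - 1 : F[X]) = X - 1 := by
  have h1 : (X - 1 : F[X]).coeff 0 = -1 := by simp
  have hX : (X : F[X]).reverse = 1 := by
    rw [show (X : F[X]) = C 1 * X by rw [C_1, one_mul], reverse_mul_X, reverse_C, C_1]
  have h2 : (X - 1 : F[X]).reverse = 1 - X := by
    have h3 : (X - 1 : F[X]) = X + C (-1) := by
      rw [map_neg, C_1]; ring
    rw [h3, reverse_add_C, hX, natDegree_X, pow_one, map_neg, C_1]
    ring
  unfold crecip
  rw [h1, h2]
  simp only [inv_neg, inv_one, map_neg, C_1]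
  ring

end Aux

theorem stmt3 {q l : ℕ} (hq : IsPrimePow q)
    {F : Type*} [Field F] [Fintype F] (hF : Fintype.card F = q ^ 2)
    (hl : l.Prime) (hlodd : Odd l) (hlq : Nat.Coprime l q) :
    (∀ f : F[X], f.Monic → Irreducible f → f ∣ X ^ l - 1 → IsSCRIM q f) ∨
      scrimFactors F q l = {X - 1} := by
  classical
  obtain ⟨p, k, hpp, hk, hqpk⟩ := hq
  have hp : p.Prime := hpp.nat_prime
  have hqpk' : q = p ^ k := hqpk.symm
  have hq2 : 2 ≤ q := by
    rw [hqpk']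
    calc 2 ≤ p := hp.two_le
    _ ≤ p ^ k := Nat.le_self_pow hk.ne' p
  have hl3 : 3 ≤ l := by
    have h2 := hl.two_le
    have h3 := Nat.odd_iff.mp hlodd
    omega
  haveI : Fact p.Prime := ⟨hp⟩
  have hcardF : Fintype.card F = p ^ (2 * k) := by
    rw [hF, hqpk', ← pow_mul, mul_comm]
  have hrc : ringChar F = p := by
    have h1 : (ringChar F).Prime := CharP.char_is_prime F (ringChar F)
    have h2 : ringChar F ∣ p ^ (2 * k) := by
      have h3 : ((Fintype.card F : ℕ) : F) = 0 := FiniteField.cast_card_eq_zero F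
      rw [hcardF] at h3
      exact (CharP.cast_eq_zero_iff F (ringChar F) _).mp h3
    exact (Nat.prime_dvd_prime_iff_eq h1 hp).mp (h1.dvd_of_dvd_pow h2)
  haveI hcF : CharP F p := hrc ▸ ringChar.charP F
  haveI : ExpChar F p := ExpChar.prime hp
  set E := AlgebraicClosure F with hE
  haveI : CharP E p := charP_of_injective_algebraMap (algebraMap F E).injective p
  haveI : ExpChar E p := ExpChar.prime hp
  -- elements of `F` are fixed by `x ↦ x ^ (q²)^n`
  have hfrobF : ∀ (a : F) (n : ℕ), a ^ (q ^ 2) ^ n = a := by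
    intro a n
    have h := FiniteField.pow_card_pow (K := F) n a
    rwa [hF] at h
  -- roots of polynomials over F are stable under `x ↦ x ^ (q²)^n`
  have hrootpow : ∀ (f : F[X]) (x : E) (n : ℕ), aeval x f = 0 →
      aeval (x ^ (q ^ 2) ^ n) f = 0 := by
    intro f x n hx
    set φ := iterateFrobenius E p (k * (2 * n)) with hφdef
    have hφ : ∀ y : E, φ y = y ^ (q ^ 2) ^ n := by
      intro y
      have hpow : p ^ (k * (2 * n)) = (q ^ 2) ^ n := by
        rw [pow_mul, ← hqpk', pow_mul]
      rw [hφdef, iterateFrobenius_def, hpow]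
    have hcomp : φ.comp (algebraMap F E) = algebraMap F E := by
      ext a
      rw [RingHom.comp_apply, hφ, ← map_pow, hfrobF]
    calc aeval (x ^ (q ^ 2) ^ n) f
        = eval₂ (φ.comp (algebraMap F E)) (φ x) f := by rw [hcomp, hφ, aeval_def]
    _ = φ (eval₂ (algebraMap F E) x f) := by rw [hom_eval₂]
    _ = 0 := by rw [← aeval_def, hx, map_zero]
  -- basic facts for monic irreducible divisors of X^l - 1
  have hsetup : ∀ f : F[X], f.Monic → Irreducible f → f ∣ X ^ l - 1 →
      f.coeff 0 ≠ 0 ∧ ∃ α : E, aeval α f = 0 ∧ α ^ l = 1 ∧ α ≠ 0 := by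
    intro f hm hirr hdvd
    have h00 : f.coeff 0 ≠ 0 := by
      intro h0
      have hXdvd : (X : F[X]) ∣ X ^ l - 1 := dvd_trans (X_dvd_iff.mpr h0) hdvd
      obtain ⟨c, hc⟩ := hXdvd
      have := congrArg (eval 0) hc
      simp [zero_pow (by omega : l ≠ 0)] at this
    obtain ⟨α, hαroot⟩ := IsAlgClosed.exists_aeval_eq_zero E f
      (degree_pos_of_irreducible hirr).ne'
    have hαl : α ^ l = 1 := by
      obtain ⟨c, hc⟩ := hdvd
      have h := congrArg (aeval α) hc
      rw [map_sub, map_pow, map_one, aeval_X, map_mul, hαroot, zero_mul,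
        sub_eq_zero] at h
      exact h
    have hα0 : α ≠ 0 := by
      intro h0
      rw [h0, zero_pow (by omega : l ≠ 0)] at hαl
      exact zero_ne_one hαl
    exact ⟨h00, α, hαroot, hαl, hα0⟩
  by_cases hC : ∃ j : ℕ, l ∣ q ^ (2 * j + 1) + 1
  · left
    intro f hm hirr hdvd
    refine ⟨hm, hirr, ?_⟩
    obtain ⟨h00, α, hαroot, hαl, hα0⟩ := hsetup f hm hirr hdvd
    obtain ⟨j, hj⟩ := hC
    have key : α⁻¹ ^ q = α ^ (q ^ 2) ^ (j + 1) := by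
      have e1 : α ^ (q ^ 2) ^ (j + 1) * α ^ q = 1 := by
        obtain ⟨m, hm'⟩ := hj
        have hexp : (q ^ 2) ^ (j + 1) + q = l * (m * q) := by
          calc (q ^ 2) ^ (j + 1) + q = q * (q ^ (2 * j + 1) + 1) := by ring
          _ = q * (l * m) := by rw [hm']
          _ = l * (m * q) := by ring
        rw [← pow_add, hexp, pow_mul, hαl, one_pow]
      have e2 : α⁻¹ ^ q * α ^ q = 1 := by
        rw [← mul_pow, inv_mul_cancel₀ hα0, one_pow]
      have hαq : α ^ q ≠ 0 := pow_ne_zero _ hα0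
      exact mul_right_cancel₀ hαq (e2.trans e1.symm)
    have hroot2 : aeval (α⁻¹ ^ q) f = 0 := by
      rw [key]; exact hrootpow f α (j + 1) hαroot
    have hroot3 : aeval (α⁻¹ ^ q) (cdagger q f) = 0 :=
      aeval_cdagger hqpk' hα0 hαroot
    have hmin : f = minpoly F (α⁻¹ ^ q) :=
      minpoly.eq_of_irreducible_of_monic hirr hroot2 hm
    have hdvd2 : f ∣ cdagger q f := by
      have h := minpoly.dvd F (α⁻¹ ^ q) hroot3
      rwa [← hmin] at h
    have hmd : (cdagger q f).Monic := by
      rw [cdagger_eq_map hqpk']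
      exact (crecip_monic h00).map _
    have hdeq : (cdagger q f).natDegree = f.natDegree := by
      rw [cdagger_eq_map hqpk', natDegree_map, crecip_natDegree h00]
    exact monic_dvd_eq hm hmd hdvd2 hdeq.le
  · right
    ext f
    simp only [scrimFactors, Set.mem_setOf_eq, Set.mem_singleton_iff]
    constructor
    · rintro ⟨⟨hm, hirr, hself⟩, hdvd⟩
      by_contra hne
      obtain ⟨h00, α, hαroot, hαl, hα0⟩ := hsetup f hm hirr hdvd
      have hminα : f = minpoly F α :=
        minpoly.eq_of_irreducible_of_monic hirr hαroot hm
      have hα1 : α ≠ 1 := by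
        rintro rfl
        apply hne
        rw [hminα, show (1 : E) = algebraMap F E 1 by rw [map_one],
          minpoly.eq_X_sub_C, C_1]
      have hordα : orderOf α = l := by
        have h1 : orderOf α ∣ l := orderOf_dvd_of_pow_eq_one hαl
        rcases (Nat.Prime.eq_one_or_self_of_dvd hl _ h1) with h | h
        · exact absurd (orderOf_eq_one_iff.mp h) hα1
        · exact h
      -- fixed points of `x ↦ x ^ q²` in E are exactly the image of F
      have fixedMem : ∀ c : E, c ^ q ^ 2 = c → c ∈ Set.range (algebraMap F E) := by
        intro c hc
        by_contra hcn
        have hq1 : 1 < q ^ 2 := by nlinarith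
        set P : E[X] := X ^ q ^ 2 - X with hP
        have hPne : P ≠ 0 := FiniteField.X_pow_card_sub_X_ne_zero E hq1
        have hPdeg : P.natDegree = q ^ 2 :=
          FiniteField.X_pow_card_sub_X_natDegree_eq E hq1
        set S : Finset E := Finset.univ.image (algebraMap F E) with hS
        have hScard : S.card = q ^ 2 := by
          rw [hS, Finset.card_image_of_injective _ (algebraMap F E).injective,
            Finset.card_univ, hF]
        have hroots : ∀ x : E, x ^ q ^ 2 = x → x ∈ P.roots := by
          intro x hx
          rw [mem_roots hPne]
          simp [hP, IsRoot, hx]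
        have hsub : insert c S ⊆ P.roots.toFinset := by
          intro x hx
          rcases Finset.mem_insert.mp hx with rfl | hx
          · exact Multiset.mem_toFinset.mpr (hroots x hc)
          · obtain ⟨a, _, rfl⟩ := Finset.mem_image.mp hx
            refine Multiset.mem_toFinset.mpr (hroots _ ?_)
            rw [← map_pow, ← hF, FiniteField.pow_card]
        have hcS : c ∉ S := by
          intro h
          obtain ⟨a, _, rfl⟩ := Finset.mem_image.mp h
          exact hcn ⟨a, rfl⟩
        have h1 : q ^ 2 + 1 ≤ (P.roots.toFinset).card := by
          calc q ^ 2 + 1 = (insert c S).card := by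
                rw [Finset.card_insert_of_notMem hcS, hScard]
          _ ≤ _ := Finset.card_le_card hsub
        have h2 : (P.roots.toFinset).card ≤ q ^ 2 :=
          le_trans (Multiset.toFinset_card_le _)
            (le_trans (P.card_roots') (le_of_eq hPdeg))
        omega
      -- the orbit polynomial
      have hcoQ : Nat.Coprime (q ^ 2) l := (hlq.pow_right 2).symm
      have hQl : (q ^ 2) ^ (l - 1) ≡ 1 [MOD l] := by
        have h := Nat.ModEq.pow_totient hcoQ
        rwa [Nat.totient_prime hl] at h
      have hαQ : α ^ (q ^ 2) ^ (l - 1) = α := by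
        have hN : (q ^ 2) ^ (l - 1) % l = 1 % l := hQl
        have hdm := Nat.div_add_mod ((q ^ 2) ^ (l - 1)) l
        have hNeq : (q ^ 2) ^ (l - 1) = l * ((q ^ 2) ^ (l - 1) / l) + 1 := by
          have h1 : 1 % l = 1 := Nat.mod_eq_of_lt (by omega)
          omega
        rw [hNeq, pow_add, pow_mul, hαl, one_pow, pow_one, one_mul]
      set v : ℕ → E[X] := fun j => X - C (α ^ (q ^ 2) ^ j) with hv
      set g : E[X] := ∏ j ∈ Finset.range (l - 1), v j with hg
      set τ := iterateFrobenius E p (2 * k) with hτdef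
      have hτ : ∀ y : E, τ y = y ^ q ^ 2 := by
        intro y
        have hpow : p ^ (2 * k) = q ^ 2 := by
          rw [mul_comm, pow_mul, ← hqpk']
        rw [hτdef, iterateFrobenius_def, hpow]
      have hmapg : g.map τ = g := by
        have h1 : g.map τ = ∏ j ∈ Finset.range (l - 1), v (j + 1) := by
          rw [hg, Polynomial.map_prod]
          refine Finset.prod_congr rfl fun j _ => ?_
          rw [hv]
          simp only [Polynomial.map_sub, map_X, map_C]
          rw [hτ, ← pow_mul, ← pow_succ]
        have hvne : v 0 ≠ 0 := by
          rw [hv]; exact (monic_X_sub_C _).ne_zero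
        have h2 : (∏ j ∈ Finset.range (l - 1), v (j + 1)) * v 0
            = (∏ j ∈ Finset.range (l - 1), v j) * v 0 := by
          have hvl : v (l - 1) = v 0 := by
            rw [hv]
            simp only []
            rw [hαQ, pow_zero, pow_one]
          calc (∏ j ∈ Finset.range (l - 1), v (j + 1)) * v 0
              = ∏ j ∈ Finset.range (l - 1 + 1), v j := (Finset.prod_range_succ' v _).symm
          _ = (∏ j ∈ Finset.range (l - 1), v j) * v (l - 1) := Finset.prod_range_succ v _
          _ = (∏ j ∈ Finset.range (l - 1), v j) * v 0 := by rw [hvl]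
        rw [h1, mul_right_cancel₀ hvne h2]
      have hcoeffs : ∀ n : ℕ, g.coeff n ∈ Set.range (algebraMap F E) := by
        intro n
        apply fixedMem
        have := congrArg (fun h : E[X] => h.coeff n) hmapg
        simpa [coeff_map, hτ] using this
      obtain ⟨g₀, hg₀⟩ := (Polynomial.mem_lifts g).mp
        ((Polynomial.lifts_iff_coeff_lifts g).mpr hcoeffs)
      have hevalg : ∀ x : E, aeval x g₀ = eval x g := by
        intro x
        rw [aeval_def, ← eval_map, hg₀]
      have hαg : aeval α g₀ = 0 := by
        rw [hevalg, hg, eval_prod]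
        refine Finset.prod_eq_zero (Finset.mem_range.mpr (by omega : 0 < l - 1)) ?_
        rw [hv]
        simp
      have hfdvd : f ∣ g₀ := by
        rw [hminα]; exact minpoly.dvd F α hαg
      have hγc : aeval (α⁻¹ ^ q) (cdagger q f) = 0 :=
        aeval_cdagger hqpk' hα0 hαroot
      have hγf : aeval (α⁻¹ ^ q) f = 0 := by rw [hself]; exact hγc
      have hγg : eval (α⁻¹ ^ q) g = 0 := by
        rw [← hevalg]
        obtain ⟨c, rfl⟩ := hfdvd
        rw [map_mul, hγf, zero_mul]
      obtain ⟨j, hjmem, hvj⟩ := Finset.prod_eq_zero_iff.mp (by rwa [hg, eval_prod] at hγg)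
      have hγeq : α⁻¹ ^ q = α ^ (q ^ 2) ^ j := by
        rw [hv] at hvj
        simp only [eval_sub, eval_X, eval_C, sub_eq_zero] at hvj
        exact hvj
      have hone : α ^ ((q ^ 2) ^ j + q) = 1 := by
        rw [pow_add, ← hγeq, ← mul_pow, inv_mul_cancel₀ hα0, one_pow]
      have hdvdl : l ∣ (q ^ 2) ^ j + q := by
        rw [← hordα]
        exact orderOf_dvd_of_pow_eq_one hone
      apply hC
      rcases j with _ | j'
      · exact ⟨0, by simpa [add_comm] using hdvdl⟩
      · refine ⟨j', ?_⟩
        have heq : (q ^ 2) ^ (j' + 1) + q = (q ^ (2 * j' + 1) + 1) * q := by ring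
        rw [heq] at hdvdl
        exact hlq.dvd_of_dvd_mul_right hdvdl
    · rintro rfl
      have hXm : (X - 1 : F[X]) = X - C 1 := by rw [C_1]
      refine ⟨⟨?_, ?_, ?_⟩, ?_⟩
      · rw [hXm]; exact monic_X_sub_C 1
      · rw [hXm]; exact irreducible_X_sub_C 1
      · rw [cdagger_eq_map hqpk', crecip_X_sub_one]
        simp [Polynomial.map_sub]
      · have := sub_dvd_pow_sub_pow (X : F[X]) 1 l
        rwa [one_pow] at this
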